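/- Let x = (x_j)_{j≥1} be a sequence of reals with 0 ≤ x_j < 1 for all j and Σ_{j≥1} x_j < ∞. Then for every multi-index ν ∈ F, the series Σ_{μ∈F, μ≥ν} (μ!/((μ−ν)! ν!)) · x^{μ−ν} · (1−x)^ν converges and equals ∏_{j=1}^∞ (1 − x_j)^{−1}; in particular its value is independent of ν. -/

import Mathlib

open scoped BigOperators ENNReal

noncomputable section

/-- The set `F` of finitely supported multi-indices. -/
abbrev MIdx : Type := ℕ →₀ ℕ

/-- `x^ν := ∏_j x_j^{ν_j}` for a finitely supported multi-index `ν`. -/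
def mpow (x : ℕ → ℝ) (ν : MIdx) : ℝ := ν.prod fun j k => x j ^ k

/-- `μ!/((μ-ν)!ν!) = ∏_j C(μ_j, ν_j)` (meaningful for `ν ≤ μ`). -/
def mchoose (μ ν : MIdx) : ℕ := μ.prod fun j k => k.choose (ν j)

/-!
Writing `μ = ν + m`, the `μ`-th term is `(∏_j C(m_j + ν_j, ν_j) x_j^{m_j}) (1 - x)^ν`.
A sum over finitely supported `m` of `∏_j g_j(m_j)`, with `g_j ≥ 0` and `g_j(0) = 1`, is the
infinite product of the one-variable sums `∑_k g_j(k)`: its sums over the boxes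
`{m | supp m ⊆ s, m_j < N}` are the finite products `∏_{j ∈ s} ∑_{k < N} g_j(k)`.
Here `∑_k C(k + n, n) t^k = (1 - t)^{-(n+1)}`, and the extra factors `(1 - x_j)^{-ν_j}` of the
product cancel against `(1 - x)^ν`.
-/

open Finset Filter

section FinsuppProd

variable {ι : Type*} {g : ι → ℕ → ℝ} {S : ι → ℝ} {P : ℝ}

theorem sum_finsupp_range_prod (hg0 : ∀ j, g j 0 = 1) (s : Finset ι) (N : ℕ) :
    ∑ m ∈ s.finsupp (fun _ => range N), m.prod g = ∏ j ∈ s, ∑ k ∈ range N, g j k := by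
  classical
  rw [Finset.finsupp, sum_map, prod_sum]
  refine sum_congr rfl fun p _ => ?_
  rw [Function.Embedding.coeFn_mk,
    Finsupp.prod_of_support_subset _ (Finsupp.support_indicator_subset _ _) g fun j _ => hg0 j,
    ← prod_attach]
  exact prod_congr rfl fun j _ => congrArg (g j) (Finsupp.indicator_of_mem j.2 _)

theorem exists_subset_finsupp_range (F : Finset (ι →₀ ℕ)) :
    ∃ (s : Finset ι) (N : ℕ), F ⊆ s.finsupp (fun _ => range N) := by
  classical
  refine ⟨F.sup Finsupp.support, F.sup (fun m => m.support.sup m) + 1, fun m hm =>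
    mem_finsupp_iff.2 ⟨le_sup (f := Finsupp.support) hm, fun j _ => mem_range.2 ?_⟩⟩
  by_cases hj : j ∈ m.support
  · exact Nat.lt_succ_of_le <|
      (le_sup (f := m) hj).trans (le_sup (f := fun m : ι →₀ ℕ => m.support.sup m) hm)
  · rw [Finsupp.notMem_support_iff.1 hj]
    exact Nat.succ_pos _

theorem hasSum_finsupp_prod (hg0 : ∀ j, g j 0 = 1) (hg : ∀ j k, 0 ≤ g j k)
    (hS : ∀ j, HasSum (g j) (S j)) (hP : HasProd S P) :
    HasSum (fun m : ι →₀ ℕ => m.prod g) P := by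
  have hS1 (j : ι) : 1 ≤ S j := hg0 j ▸ le_hasSum (hS j) 0 fun k _ => hg j k
  refine hasSum_of_isLUB_of_nonneg _ (fun m => prod_nonneg fun j _ => hg j _) ⟨?_, ?_⟩
  · rintro _ ⟨F, rfl⟩
    obtain ⟨s, N, hF⟩ := exists_subset_finsupp_range F
    calc ∑ m ∈ F, m.prod g
        ≤ ∑ m ∈ s.finsupp (fun _ => range N), m.prod g :=
          sum_le_sum_of_subset_of_nonneg hF fun m _ _ => prod_nonneg fun j _ => hg j _
      _ = ∏ j ∈ s, ∑ k ∈ range N, g j k := sum_finsupp_range_prod hg0 s N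
      _ ≤ ∏ j ∈ s, S j := prod_le_prod (fun j _ => sum_nonneg fun k _ => hg j k)
          fun j _ => sum_le_hasSum _ (fun k _ => hg j k) (hS j)
      _ ≤ P := ge_of_tendsto hP <|
          eventually_atTop.2 ⟨s, fun _ hst => prod_mono_set_of_one_le hS1 hst⟩
  · intro y hy
    refine le_of_tendsto' hP fun s => le_of_tendsto'
      (tendsto_finsetProd s fun j _ => (hS j).tendsto_sum_nat) fun N => ?_
    rw [← sum_finsupp_range_prod hg0]
    exact hy ⟨_, rfl⟩

end FinsuppProd

theorem hasSum_subtype_le_iff {α M : Type*} [AddCommMonoid α] [PartialOrder α]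
    [CanonicallyOrderedAdd α] [IsLeftCancelAdd α] [AddCommMonoid M] [TopologicalSpace M]
    (f : α → M) (a : α) {b : M} :
    HasSum (fun μ : {μ // a ≤ μ} => f μ) b ↔ HasSum (fun m => f (a + m)) b := by
  have hrange : Set.range (a + ·) = {μ | a ≤ μ} := by
    ext μ
    simp [le_iff_exists_add, eq_comm]
  have h := (add_right_injective a).hasSum_range_iff (f := f) (a := b)
  rw [hrange] at h
  exact h

theorem mchoose_add_left (ν m : MIdx) :
    mchoose (ν + m) ν = m.prod fun j k => (k + ν j).choose (ν j) := by
  rw [Finsupp.prod_of_support_subset m (Finsupp.support_mono le_add_self) _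
    fun j _ => by simp, mchoose, Finsupp.prod]
  exact prod_congr rfl fun j _ => by rw [Finsupp.add_apply, add_comm]

theorem Real.multipliable_inv_one_sub {ι : Type*} {x : ι → ℝ} (hx : ∀ j, x j ≠ 1)
    (hsum : Summable x) : Multipliable fun j => (1 - x j)⁻¹ := by
  have hsmall : ∀ᶠ j in cofinite, |x j| ≤ 1 / 2 :=
    hsum.tendsto_cofinite_zero.abs.eventually (ge_mem_nhds (by norm_num))
  have hq : Summable fun j => x j / (1 - x j) := by
    refine hsum.abs.mul_left 2 |>.of_norm_bounded_eventually ?_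
    filter_upwards [hsmall] with j hj
    have hj' : x j ≤ 1 / 2 := (abs_le.1 hj).2
    rw [Real.norm_eq_abs, abs_div, abs_of_pos (by linarith : 0 < 1 - x j),
      div_le_iff₀ (by linarith)]
    nlinarith [abs_nonneg (x j), le_abs_self (x j)]
  refine (Real.multipliable_one_add_of_summable hq).congr fun j => ?_
  rw [one_add_div (sub_ne_zero.2 (hx j).symm), sub_add_cancel, one_div]

theorem hasProd_inv_pow_succ {y : ℕ → ℝ} (hy : Multipliable fun j => (y j)⁻¹) (ν : MIdx) :
    HasProd (fun j => (y j ^ (ν j + 1))⁻¹) ((∏' j, (y j)⁻¹) * (mpow y ν)⁻¹) := by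
  have hfin : HasProd (fun j => (y j ^ ν j)⁻¹) (mpow y ν)⁻¹ := by
    rw [mpow, Finsupp.prod, ← prod_inv_distrib]
    exact hasProd_prod_of_ne_finset_one fun j hj => by simp [Finsupp.notMem_support_iff.1 hj]
  simpa only [pow_succ', mul_inv] using hy.hasProd.mul hfin

/-- For `0 ≤ x_j < 1` with `Σ_j x_j < ∞` and any multi-index `ν`, the series
`Σ_{μ ≥ ν} (μ!/((μ-ν)!ν!)) x^{μ-ν} (1-x)^ν` converges to `∏_j (1 - x_j)^{-1}`;
in particular its value is independent of `ν`. -/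
theorem binomial_series_multiindex
    (x : ℕ → ℝ) (hx0 : ∀ j, 0 ≤ x j) (hx1 : ∀ j, x j < 1) (hsum : Summable x) :
    Multipliable (fun j => (1 - x j)⁻¹) ∧
    ∀ ν : MIdx, HasSum
      (fun μ : {μ : MIdx // ν ≤ μ} =>
        (mchoose μ.1 ν : ℝ) * mpow x (μ.1 - ν) * mpow (fun j => 1 - x j) ν)
      (∏' j, (1 - x j)⁻¹) := by
  have hM := Real.multipliable_inv_one_sub (fun j => (hx1 j).ne) hsum
  refine ⟨hM, fun ν => ?_⟩
  have hgeom (j : ℕ) := hasSum_choose_mul_geometric_of_norm_lt_one (ν j) (r := x j)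
    (by rw [Real.norm_of_nonneg (hx0 j)]; exact hx1 j)
  simp only [one_div] at hgeom
  have hmpow : mpow (fun j => 1 - x j) ν ≠ 0 :=
    prod_ne_zero_iff.2 fun j _ => pow_ne_zero _ (sub_pos.2 (hx1 j)).ne'
  have hseries := (hasSum_finsupp_prod (fun j => by simp)
    (fun j k => mul_nonneg (Nat.cast_nonneg _) (pow_nonneg (hx0 j) k)) hgeom
    (hasProd_inv_pow_succ hM ν)).mul_right (mpow (fun j => 1 - x j) ν)
  rw [inv_mul_cancel_right₀ hmpow] at hseries
  refine (hasSum_subtype_le_iff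
    (fun μ => (mchoose μ ν : ℝ) * mpow x (μ - ν) * mpow (fun j => 1 - x j) ν) ν).2
    (hseries.congr_fun fun m => ?_)
  rw [add_tsub_cancel_left, mchoose_add_left, mpow, Nat.cast_finsuppProd, ← Finsupp.prod_mul]
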